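/- Let 1 < p < q < ∞ and A(t) = t^p/p + t^q/q. Then M₀(t,A) = t^p, M_∞(t,A) = t^q, and M(t,A) = max{t^p, t^q} for all t > 0. -/

import Mathlib

open scoped ENNReal Topology

/-- The Matuszewska–Orlicz function `M(t,A) = sup_{α>0} A(αt)/A(α)`. -/
noncomputable def matusz (A : ℝ → ℝ) (t : ℝ) : ℝ≥0∞ :=
  ⨆ α ∈ Set.Ioi (0:ℝ), ENNReal.ofReal (A (α * t) / A α)

/-- `M₀(t,A) = liminf_{α→0⁺} A(αt)/A(α)`. -/
noncomputable def matusz0 (A : ℝ → ℝ) (t : ℝ) : ℝ≥0∞ :=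
  Filter.liminf (fun α => ENNReal.ofReal (A (α * t) / A α)) (𝓝[>] (0:ℝ))

/-- `M_∞(t,A) = liminf_{α→∞} A(αt)/A(α)`. -/
noncomputable def matuszInf (A : ℝ → ℝ) (t : ℝ) : ℝ≥0∞ :=
  Filter.liminf (fun α => ENNReal.ofReal (A (α * t) / A α)) Filter.atTop

/-- For `1 < p < q < ∞` and `A(t) = t^p/p + t^q/q`:
`M₀(t,A) = t^p`, `M_∞(t,A) = t^q` and `M(t,A) = max{t^p, t^q}` for all `t > 0`. -/
theorem matusz_of_pq (p q : ℝ) (hp : 1 < p) (hpq : p < q)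
    (A : ℝ → ℝ) (hA : ∀ t : ℝ, A t = t ^ p / p + t ^ q / q) :
    ∀ t : ℝ, 0 < t →
      matusz0 A t = ENNReal.ofReal (t ^ p) ∧
      matuszInf A t = ENNReal.ofReal (t ^ q) ∧
      matusz A t = ENNReal.ofReal (max (t ^ p) (t ^ q)) := by
  intro t ht
  have hp0 : (0:ℝ) < p := lt_trans one_pos hp
  have hq0 : (0:ℝ) < q := lt_trans hp0 hpq
  have hqp : (0:ℝ) < q - p := sub_pos.mpr hpq
  have hApos : ∀ x : ℝ, 0 < x → 0 < A x := by
    intro x hx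
    rw [hA]
    have h1 : 0 < x ^ p := Real.rpow_pos_of_pos hx p
    have h2 : 0 < x ^ q := Real.rpow_pos_of_pos hx q
    positivity
  -- the ratio in a form suitable for α → 0⁺
  have key0 : ∀ α : ℝ, 0 < α →
      A (α * t) / A α = (t^p/p + t^q * α^(q-p)/q) / (1/p + α^(q-p)/q) := by
    intro α hα
    have hαp : (0:ℝ) < α ^ p := Real.rpow_pos_of_pos hα p
    have h3 : α ^ q = α ^ p * α ^ (q-p) := by
      rw [← Real.rpow_add hα]; congr 1; ring
    have h1 : (α*t) ^ p = α ^ p * t ^ p := Real.mul_rpow hα.le ht.le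
    have h2 : (α*t) ^ q = α ^ p * α ^ (q-p) * t ^ q := by
      rw [Real.mul_rpow hα.le ht.le, h3]
    rw [hA, hA, h1, h2, h3,
      show α^p * t^p/p + α^p * α^(q-p) * t^q/q = α^p * (t^p/p + t^q * α^(q-p)/q) from by ring,
      show α^p/p + α^p * α^(q-p)/q = α^p * (1/p + α^(q-p)/q) from by ring,
      mul_div_mul_left _ _ hαp.ne']
  -- the ratio in a form suitable for α → ∞
  have keyInf : ∀ α : ℝ, 0 < α →
      A (α * t) / A α = (t^p * α^(p-q)/p + t^q/q) / (α^(p-q)/p + 1/q) := by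
    intro α hα
    have hαq : (0:ℝ) < α ^ q := Real.rpow_pos_of_pos hα q
    have h3 : α ^ p = α ^ q * α ^ (p-q) := by
      rw [← Real.rpow_add hα]; congr 1; ring
    have h1 : (α*t) ^ p = α ^ q * α ^ (p-q) * t ^ p := by
      rw [Real.mul_rpow hα.le ht.le, h3]
    have h2 : (α*t) ^ q = α ^ q * t ^ q := Real.mul_rpow hα.le ht.le
    rw [hA, hA, h1, h2, h3,
      show α^q * α^(p-q) * t^p/p + α^q * t^q/q = α^q * (t^p * α^(p-q)/p + t^q/q) from by ring,
      show α^q * α^(p-q)/p + α^q/q = α^q * (α^(p-q)/p + 1/q) from by ring,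
      mul_div_mul_left _ _ hαq.ne']
  -- uniform upper bound by max
  have bound : ∀ α : ℝ, 0 < α → A (α * t) / A α ≤ max (t^p) (t^q) := by
    intro α hα
    have hαp : (0:ℝ) < α ^ p := Real.rpow_pos_of_pos hα p
    have hαq : (0:ℝ) < α ^ q := Real.rpow_pos_of_pos hα q
    have h1 : (α*t) ^ p = α ^ p * t ^ p := Real.mul_rpow hα.le ht.le
    have h2 : (α*t) ^ q = α ^ q * t ^ q := Real.mul_rpow hα.le ht.le
    rw [div_le_iff₀ (hApos α hα), hA, hA, h1, h2]
    have e1 : t^p ≤ max (t^p) (t^q) := le_max_left _ _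
    have e2 : t^q ≤ max (t^p) (t^q) := le_max_right _ _
    calc α^p * t^p/p + α^q * t^q/q = t^p * (α^p/p) + t^q * (α^q/q) := by ring
      _ ≤ max (t^p) (t^q) * (α^p/p) + max (t^p) (t^q) * (α^q/q) :=
          add_le_add (mul_le_mul_of_nonneg_right e1 (by positivity))
            (mul_le_mul_of_nonneg_right e2 (by positivity))
      _ = max (t^p) (t^q) * (α^p/p + α^q/q) := by ring
  -- limit as α → 0⁺
  have g0 : Filter.Tendsto (fun α : ℝ => α ^ (q-p)) (𝓝[>] (0:ℝ)) (𝓝 0) := by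
    have h := (Real.continuousAt_rpow_const 0 (q-p) (Or.inr hqp.le)).tendsto
    rw [Real.zero_rpow hqp.ne'] at h
    exact h.mono_left nhdsWithin_le_nhds
  have T0 : Filter.Tendsto (fun α => A (α * t) / A α) (𝓝[>] (0:ℝ)) (𝓝 (t^p)) := by
    have lim : Filter.Tendsto (fun α : ℝ => (t^p/p + t^q * α^(q-p)/q) / (1/p + α^(q-p)/q))
        (𝓝[>] (0:ℝ)) (𝓝 ((t^p/p + t^q * 0/q) / (1/p + 0/q))) := by
      refine Filter.Tendsto.div ?_ ?_ ?_
      · exact (((g0.const_mul (t^q)).div_const q).const_add (t^p/p))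
      · exact ((g0.div_const q).const_add (1/p))
      · have : (1:ℝ)/p + 0/q = 1/p := by ring
        rw [this]; positivity
    have e : (t^p/p + t^q * 0/q) / (1/p + 0/q) = t^p := by
      field_simp
      ring
    rw [e] at lim
    exact lim.congr' (by filter_upwards [self_mem_nhdsWithin] with α hα using (key0 α hα).symm)
  -- limit as α → ∞
  have gInf : Filter.Tendsto (fun α : ℝ => α ^ (p-q)) Filter.atTop (𝓝 0) := by
    have h := tendsto_rpow_neg_atTop hqp
    simpa [neg_sub] using h
  have TInf : Filter.Tendsto (fun α => A (α * t) / A α) Filter.atTop (𝓝 (t^q)) := by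
    have lim : Filter.Tendsto (fun α : ℝ => (t^p * α^(p-q)/p + t^q/q) / (α^(p-q)/p + 1/q))
        Filter.atTop (𝓝 ((t^p * 0/p + t^q/q) / (0/p + 1/q))) := by
      refine Filter.Tendsto.div ?_ ?_ ?_
      · exact (((gInf.const_mul (t^p)).div_const p).add_const (t^q/q))
      · exact ((gInf.div_const p).add_const (1/q))
      · have : (0:ℝ)/p + 1/q = 1/q := by ring
        rw [this]; positivity
    have e : (t^p * 0/p + t^q/q) / (0/p + 1/q) = t^q := by
      field_simp
      ring
    rw [e] at lim
    exact lim.congr' ((Filter.eventually_gt_atTop 0).mono fun α hα => (keyInf α hα).symm)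
  -- ENNReal versions
  have E0 : Filter.Tendsto (fun α => ENNReal.ofReal (A (α * t) / A α)) (𝓝[>] (0:ℝ))
      (𝓝 (ENNReal.ofReal (t^p))) := (ENNReal.continuous_ofReal.tendsto _).comp T0
  have EInf : Filter.Tendsto (fun α => ENNReal.ofReal (A (α * t) / A α)) Filter.atTop
      (𝓝 (ENNReal.ofReal (t^q))) := (ENNReal.continuous_ofReal.tendsto _).comp TInf
  have hm0 : matusz0 A t = ENNReal.ofReal (t^p) := E0.liminf_eq
  have hmInf : matuszInf A t = ENNReal.ofReal (t^q) := EInf.liminf_eq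
  refine ⟨hm0, hmInf, ?_⟩
  -- the sup
  have hmemsup : ∀ α : ℝ, 0 < α →
      ENNReal.ofReal (A (α * t) / A α) ≤ matusz A t := by
    intro α hα
    unfold matusz
    exact le_iSup₂ (f := fun (α : ℝ) (_ : α ∈ Set.Ioi (0:ℝ)) => ENNReal.ofReal (A (α * t) / A α)) α (Set.mem_Ioi.mpr hα)
  have hub : matusz A t ≤ ENNReal.ofReal (max (t^p) (t^q)) := by
    refine iSup₂_le fun α hα => ENNReal.ofReal_le_ofReal (bound α hα)
  have h0le : ENNReal.ofReal (t^p) ≤ matusz A t :=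
    le_of_tendsto E0 (by filter_upwards [self_mem_nhdsWithin] with α hα using hmemsup α hα)
  have hInfle : ENNReal.ofReal (t^q) ≤ matusz A t :=
    le_of_tendsto EInf ((Filter.eventually_gt_atTop 0).mono fun α hα => hmemsup α hα)
  refine le_antisymm hub ?_
  rcases le_total (t^p) (t^q) with h | h
  · rw [max_eq_right h]; exact hInfle
  · rw [max_eq_left h]; exact h0le
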